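/- arXiv:2209.02144 — 2 statements merged into one kernel-verified Lean document; each statement's English description precedes it below -/
import Mathlib

section
/- Under the hypotheses of the pathwise comparison lemma, if additionally E[sup_{0≤t≤T}|G(t)|] < ∞ (G a stochastic process with a.s. continuous paths), then sup_{0≤t≤T} E|X(t) − x(t)| ≤ ε·e^{L T}·E[sup_{0≤t≤T}|G(t)|]. -/
open Set MeasureTheory Topology

/-! The difference `Z = X ω - x` solves `Z t = ∫₀ᵗ θ Z + ε G ω t`, so
`|Z t| ≤ ε S + L ∫₀ᵗ |Z|` with `S = sup_{[0,T]} |G ω|`, and Grönwall's inequality gives the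
pathwise bound `|Z t| ≤ ε e^{LT} S` for almost every `ω`.
Integrating it over `ω` gives the claim. -/

theorem add_mul_gronwallBound_zero (K C x : ℝ) :
    C + K * gronwallBound 0 K C x = C * Real.exp (K * x) := by
  rcases eq_or_ne K 0 with rfl | hK
  · simp
  · rw [gronwallBound_of_K_ne_0 hK]
    field_simp
    ring

theorem le_mul_exp_of_le_add_mul_integral {u : ℝ → ℝ} {a b K C : ℝ} (hK : 0 ≤ K)
    (hu : ContinuousOn u (Icc a b)) (h : ∀ t ∈ Icc a b, u t ≤ C + K * ∫ v in a..t, u v) :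
    ∀ t ∈ Icc a b, u t ≤ C * Real.exp (K * (t - a)) := by
  have hderiv : ∀ t ∈ Icc a b, HasDerivWithinAt (fun s => ∫ v in a..s, u v) (u t) (Icc a b) t := by
    intro t ht
    have := Fact.mk ht
    exact intervalIntegral.integral_hasDerivWithinAt_right
      ((hu.mono (Icc_subset_Icc le_rfl ht.2)).intervalIntegrable_of_Icc ht.1)
      (hu.stronglyMeasurableAtFilter_nhdsWithin measurableSet_Icc t) (hu.continuousWithinAt ht)
  have hprim : ∀ t ∈ Icc a b, ∫ v in a..t, u v ≤ gronwallBound 0 K C (t - a) := by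
    refine le_gronwallBound_of_liminf_deriv_right_le (f' := u) ?_ (fun t ht r hr => ?_) (by simp)
      (fun t ht => by linarith [h t (Ico_subset_Icc_self ht)])
    · exact fun t ht => (hderiv t ht).continuousWithinAt
    · have hnhds : Icc a b ∈ 𝓝[≥] t :=
        Filter.mem_of_superset (Icc_mem_nhdsGE ht.2) (Icc_subset_Icc_left ht.1)
      exact ((hderiv t (Ico_subset_Icc_self ht)).mono_of_mem_nhdsWithin hnhds).liminf_right_slope_le
        hr
  intro t ht
  calc u t ≤ C + K * ∫ v in a..t, u v := h t ht
    _ ≤ C + K * gronwallBound 0 K C (t - a) := by gcongr; exact hprim t ht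
    _ = C * Real.exp (K * (t - a)) := add_mul_gronwallBound_zero K C (t - a)

theorem ContinuousOn.le_ciSup_of_isCompact {β : Type*} [TopologicalSpace β] {K : Set β}
    {f : β → ℝ} (hK : IsCompact K) (hf : ContinuousOn f K) {s : β} (hs : s ∈ K) :
    f s ≤ ⨆ t : K, f t := by
  refine le_ciSup (f := fun t : K => f t) ?_ ⟨s, hs⟩
  rw [← image_eq_range]
  exact hK.bddAbove_image hf

theorem intervalIntegrable_mul_continuousOn_of_abs_le {θ f : ℝ → ℝ} {a b L : ℝ}
    (hθ_meas : Measurable θ) (hθ_bdd : ∀ t ∈ Icc a b, |θ t| ≤ L) (hf : ContinuousOn f (Icc a b))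
    {s t : ℝ} (hs : s ∈ Icc a b) (ht : t ∈ Icc a b) :
    IntervalIntegrable (fun v => θ v * f v) volume s t := by
  have hθ : IntegrableOn θ (Icc a b) :=
    .of_bound measure_Icc_lt_top hθ_meas.aestronglyMeasurable L
      ((ae_restrict_iff' measurableSet_Icc).2 (ae_of_all _ hθ_bdd))
  exact ((hθ.mul_continuousOn hf isCompact_Icc).mono_set (uIcc_subset_Icc hs ht)).intervalIntegrable

section LinearComparison

variable {θ G X x : ℝ → ℝ} {a b L ε x₀ : ℝ}

theorem sub_eq_integral_mul_sub_add (hθ_meas : Measurable θ)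
    (hθ_bdd : ∀ t ∈ Icc a b, |θ t| ≤ L)
    (hX_cont : ContinuousOn X (Icc a b)) (hx_cont : ContinuousOn x (Icc a b))
    (hX : ∀ t ∈ Icc a b, X t = x₀ + (∫ v in a..t, θ v * X v) + ε * G t)
    (hx : ∀ t ∈ Icc a b, x t = x₀ + ∫ v in a..t, θ v * x v) {t : ℝ} (ht : t ∈ Icc a b) :
    X t - x t = (∫ v in a..t, θ v * (X v - x v)) + ε * G t := by
  have ha : a ∈ Icc a b := ⟨le_rfl, ht.1.trans ht.2⟩
  have hθX := intervalIntegrable_mul_continuousOn_of_abs_le hθ_meas hθ_bdd hX_cont ha ht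
  have hθx := intervalIntegrable_mul_continuousOn_of_abs_le hθ_meas hθ_bdd hx_cont ha ht
  simp only [mul_sub]
  rw [intervalIntegral.integral_sub hθX hθx, hX t ht, hx t ht]
  ring

theorem abs_sub_le_add_mul_integral (hε : 0 ≤ ε) (hθ_meas : Measurable θ)
    (hθ_bdd : ∀ t ∈ Icc a b, |θ t| ≤ L)
    (hX_cont : ContinuousOn X (Icc a b)) (hx_cont : ContinuousOn x (Icc a b))
    (hX : ∀ t ∈ Icc a b, X t = x₀ + (∫ v in a..t, θ v * X v) + ε * G t)
    (hx : ∀ t ∈ Icc a b, x t = x₀ + ∫ v in a..t, θ v * x v)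
    {S : ℝ} (hG : ∀ t ∈ Icc a b, |G t| ≤ S) {t : ℝ} (ht : t ∈ Icc a b) :
    |X t - x t| ≤ ε * S + L * ∫ v in a..t, |X v - x v| := by
  have ha : a ∈ Icc a b := ⟨le_rfl, ht.1.trans ht.2⟩
  have hsub : Icc a t ⊆ Icc a b := Icc_subset_Icc le_rfl ht.2
  have hdiff : ContinuousOn (fun v => |X v - x v|) (Icc a b) := (hX_cont.sub hx_cont).abs
  calc |X t - x t| = |(∫ v in a..t, θ v * (X v - x v)) + ε * G t| := by
        rw [sub_eq_integral_mul_sub_add hθ_meas hθ_bdd hX_cont hx_cont hX hx ht]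
    _ ≤ (∫ v in a..t, |θ v * (X v - x v)|) + ε * S := by
        refine (abs_add_le _ _).trans (add_le_add
          (intervalIntegral.abs_integral_le_integral_abs ht.1) ?_)
        rw [abs_mul, abs_of_nonneg hε]
        exact mul_le_mul_of_nonneg_left (hG t ht) hε
    _ ≤ (∫ v in a..t, L * |X v - x v|) + ε * S := by
        gcongr
        refine intervalIntegral.integral_mono_on ht.1
          (intervalIntegrable_mul_continuousOn_of_abs_le hθ_meas hθ_bdd
            (hX_cont.sub hx_cont) ha ht).abs
          (((hdiff.mono hsub).intervalIntegrable_of_Icc ht.1).const_mul L) fun v hv => ?_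
        rw [abs_mul]
        exact mul_le_mul_of_nonneg_right (hθ_bdd v (hsub hv)) (abs_nonneg _)
    _ = ε * S + L * ∫ v in a..t, |X v - x v| := by
        rw [intervalIntegral.integral_const_mul, add_comm]

theorem abs_sub_le_mul_exp (hL : 0 ≤ L) (hε : 0 ≤ ε) (hθ_meas : Measurable θ)
    (hθ_bdd : ∀ t ∈ Icc a b, |θ t| ≤ L)
    (hX_cont : ContinuousOn X (Icc a b)) (hx_cont : ContinuousOn x (Icc a b))
    (hX : ∀ t ∈ Icc a b, X t = x₀ + (∫ v in a..t, θ v * X v) + ε * G t)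
    (hx : ∀ t ∈ Icc a b, x t = x₀ + ∫ v in a..t, θ v * x v)
    {S : ℝ} (hG : ∀ t ∈ Icc a b, |G t| ≤ S) :
    ∀ t ∈ Icc a b, |X t - x t| ≤ ε * S * Real.exp (L * (t - a)) :=
  le_mul_exp_of_le_add_mul_integral hL (hX_cont.sub hx_cont).abs fun _ ht =>
    abs_sub_le_add_mul_integral hε hθ_meas hθ_bdd hX_cont hx_cont hX hx hG ht

end LinearComparison

theorem expectation_comparison_general
    {Ω : Type*} [MeasurableSpace Ω] (μ : Measure Ω)
    (T L ε x₀ : ℝ) (hL : 0 ≤ L) (hε : 0 ≤ ε)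
    (θ : ℝ → ℝ) (G X : Ω → ℝ → ℝ) (x : ℝ → ℝ)
    (hθ_meas : Measurable θ)
    (hθ_bdd : ∀ t ∈ Icc (0:ℝ) T, |θ t| ≤ L)
    (hG_cont : ∀ᵐ ω ∂μ, ContinuousOn (G ω) (Icc 0 T))
    (hX_cont : ∀ᵐ ω ∂μ, ContinuousOn (X ω) (Icc 0 T))
    (hx_cont : ContinuousOn x (Icc 0 T))
    (hX : ∀ᵐ ω ∂μ, ∀ t ∈ Icc (0:ℝ) T,
      X ω t = x₀ + (∫ v in (0:ℝ)..t, θ v * X ω v) + ε * G ω t)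
    (hx : ∀ t ∈ Icc (0:ℝ) T, x t = x₀ + ∫ v in (0:ℝ)..t, θ v * x v)
    (hG_int : Integrable (fun ω => ⨆ t : Icc (0:ℝ) T, |G ω t|) μ) :
    ∀ t ∈ Icc (0:ℝ) T,
      (∫ ω, |X ω t - x t| ∂μ)
        ≤ ε * Real.exp (L * T) * ∫ ω, (⨆ t : Icc (0:ℝ) T, |G ω t|) ∂μ := by
  intro t ht
  have hpath : ∀ᵐ ω ∂μ, |X ω t - x t| ≤ ε * Real.exp (L * T) * ⨆ s : Icc (0:ℝ) T, |G ω s| := by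
    filter_upwards [hG_cont, hX_cont, hX] with ω hGω hXω hXω_eq
    have hsup_nonneg : 0 ≤ ⨆ s : Icc (0:ℝ) T, |G ω s| := Real.iSup_nonneg fun _ => abs_nonneg _
    calc |X ω t - x t| ≤ ε * (⨆ s : Icc (0:ℝ) T, |G ω s|) * Real.exp (L * (t - 0)) :=
          abs_sub_le_mul_exp hL hε hθ_meas hθ_bdd hXω hx_cont hXω_eq hx
            (fun s hs => hGω.abs.le_ciSup_of_isCompact isCompact_Icc hs) t ht
      _ ≤ ε * (⨆ s : Icc (0:ℝ) T, |G ω s|) * Real.exp (L * T) := by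
          rw [sub_zero]; gcongr; exact ht.2
      _ = ε * Real.exp (L * T) * ⨆ s : Icc (0:ℝ) T, |G ω s| := by ring
  calc (∫ ω, |X ω t - x t| ∂μ)
      ≤ ∫ ω, ε * Real.exp (L * T) * ⨆ s : Icc (0:ℝ) T, |G ω s| ∂μ :=
        integral_mono_of_nonneg (ae_of_all _ fun _ => abs_nonneg _) (hG_int.const_mul _) hpath
    _ = ε * Real.exp (L * T) * ∫ ω, (⨆ t : Icc (0:ℝ) T, |G ω t|) ∂μ := integral_const_mul _ _

/-- Lemma 2.1(b): expectation version of the pathwise comparison,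
`sup_{0≤t≤T} E|X_t − x_t| ≤ ε e^{LT} E[sup_{0≤t≤T}|G_t|]`. -/
theorem expectation_comparison
    {Ω : Type*} [MeasurableSpace Ω] (μ : Measure Ω) [IsProbabilityMeasure μ]
    (T L ε x₀ : ℝ) (hT : 0 ≤ T) (hL : 0 ≤ L) (hε : 0 ≤ ε)
    (θ : ℝ → ℝ) (G X : Ω → ℝ → ℝ) (x : ℝ → ℝ)
    (hθ_meas : Measurable θ)
    (hθ_bdd : ∀ t ∈ Icc (0:ℝ) T, |θ t| ≤ L)
    (hG_cont : ∀ᵐ ω ∂μ, ContinuousOn (G ω) (Icc 0 T))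
    (hG0 : ∀ᵐ ω ∂μ, G ω 0 = 0)
    (hX_cont : ∀ᵐ ω ∂μ, ContinuousOn (X ω) (Icc 0 T))
    (hx_cont : ContinuousOn x (Icc 0 T))
    (hX : ∀ᵐ ω ∂μ, ∀ t ∈ Icc (0:ℝ) T,
      X ω t = x₀ + (∫ v in (0:ℝ)..t, θ v * X ω v) + ε * G ω t)
    (hx : ∀ t ∈ Icc (0:ℝ) T, x t = x₀ + ∫ v in (0:ℝ)..t, θ v * x v)
    (hG_int : Integrable (fun ω => ⨆ t : Icc (0:ℝ) T, |G ω t|) μ)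
    (hXx_int : ∀ t ∈ Icc (0:ℝ) T, Integrable (fun ω => |X ω t - x t|) μ) :
    ∀ t ∈ Icc (0:ℝ) T,
      (∫ ω, |X ω t - x t| ∂μ)
        ≤ ε * Real.exp (L * T) * ∫ ω, (⨆ t : Icc (0:ℝ) T, |G ω t|) ∂μ :=
  expectation_comparison_general μ T L ε x₀ hL hε θ G X x hθ_meas hθ_bdd hG_cont hX_cont hx_cont hX
    hx hG_int
end

section
/- Let K : ℝ → ℝ be bounded with support in [A,B], ∫ K = 1, and ∫ uʲ K(u) du = 0 for j = 1,…,k. Suppose J : ℝ → ℝ is k-times differentiable and its k-th derivative is Lipschitz with constant L′. Then for any t and φ > 0, |∫ K(u)·(J(t + φu) − J(t)) du| ≤ (L′/k!)·φ^{k+1}·∫ |K(u)·u^{k+1}| du. -/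
/-!
The vanishing moments of `K` annihilate every polynomial `∑_{1 ≤ j ≤ k} c_j u^j`, so
`J (t + φ u) - J t` may be replaced by its Taylor remainder of order `k` at `t`. Writing that
remainder as the Lagrange remainder of order `k - 1` minus the `k`-th Taylor term gives
`(J⁽ᵏ⁾(ξ) - J⁽ᵏ⁾(t)) (φ u)^k / k!` with `ξ` between `t` and `t + φ u`, which the Lipschitz bound
controls by `L' |φ u|^(k+1) / k!`.
-/

open Set MeasureTheory

theorem Integrable.mul_of_bdd_of_support_subset_isCompact {X : Type*} [TopologicalSpace X]
    [T2Space X] [MeasurableSpace X] [OpensMeasurableSpace X] {μ : Measure X}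
    [IsFiniteMeasureOnCompacts μ] {s : Set X} (hs : IsCompact s) {K h : X → ℝ}
    (hK : Measurable K) (hK_bdd : ∃ C, ∀ u, |K u| ≤ C) (hK_supp : ∀ u ∉ s, K u = 0)
    (hh : Continuous h) : Integrable (fun u => K u * h u) μ := by
  obtain ⟨C, hC⟩ := hK_bdd
  have hsupp : Function.support (fun u => K u * h u) ⊆ s := fun u hu => by
    by_contra hus
    exact hu (by simp [hK_supp u hus])
  rw [← integrableOn_iff_integrable_of_support_subset hsupp]
  exact (hh.continuousOn.integrableOn_compact hs).bdd_mul hK.aestronglyMeasurable.restrict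
    (ae_of_all _ hC)

theorem integral_mul_sum_pow_eq_zero_of_moments {μ : Measure ℝ} {K : ℝ → ℝ} {s : Finset ℕ}
    (hint : ∀ j ∈ s, Integrable (fun u => u ^ j * K u) μ)
    (hmom : ∀ j ∈ s, ∫ u, u ^ j * K u ∂μ = 0) (a : ℕ → ℝ) :
    ∫ u, K u * ∑ j ∈ s, a j * u ^ j ∂μ = 0 := by
  have hsplit :
      (fun u => K u * ∑ j ∈ s, a j * u ^ j) = fun u => ∑ j ∈ s, a j * (u ^ j * K u) := by
    ext u
    rw [Finset.mul_sum]
    exact Finset.sum_congr rfl fun j _ => by ring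
  rw [hsplit, integral_finsetSum s fun j hj => (hint j hj).const_mul (a j)]
  exact Finset.sum_eq_zero fun j hj => by rw [integral_const_mul, hmom j hj, mul_zero]

theorem taylorWithinEval_eq_taylorWithinEval_univ {f : ℝ → ℝ} {n : ℕ} {s : Set ℝ} {t : ℝ}
    (hf : ContDiffAt ℝ n f t) (hs : UniqueDiffOn ℝ s) (ht : t ∈ s) (x : ℝ) :
    taylorWithinEval f n s t x = taylorWithinEval f n univ t x := by
  simp only [taylor_within_apply, iteratedDerivWithin_univ]
  refine Finset.sum_congr rfl fun j hj => ?_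
  rw [iteratedDerivWithin_eq_iteratedDeriv hs (hf.of_le ?_) ht]
  exact_mod_cast Finset.mem_range_succ_iff.1 hj

theorem taylorWithinEval_univ_sub_self (f : ℝ → ℝ) (n : ℕ) (t h : ℝ) :
    taylorWithinEval f n univ t (t + h) - f t =
      ∑ j ∈ Finset.Icc 1 n, iteratedDeriv j f t / j.factorial * h ^ j := by
  rw [taylor_within_apply, Finset.range_eq_Ico, Finset.sum_eq_sum_Ico_succ_bot n.succ_pos]
  simp only [iteratedDerivWithin_univ, smul_eq_mul, add_sub_cancel_left, iteratedDeriv_zero,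
    Nat.factorial_zero, Nat.cast_one, inv_one, pow_zero, one_mul, zero_add, Nat.succ_eq_add_one,
    Finset.Ico_add_one_right_eq_Icc]
  exact Finset.sum_congr rfl fun j _ => by ring

theorem abs_sub_taylorWithinEval_le_of_lipschitz {f : ℝ → ℝ} {k : ℕ} {L : ℝ}
    (hf : ContDiff ℝ k f)
    (hlip : ∀ s s' : ℝ, |iteratedDeriv k f s - iteratedDeriv k f s'| ≤ L * |s - s'|)
    (t x : ℝ) :
    |f x - taylorWithinEval f k univ t x| ≤ L / k.factorial * |x - t| ^ (k + 1) := by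
  rcases eq_or_ne t x with rfl | hx
  · simp
  have hL : 0 ≤ L := by simpa using (abs_nonneg _).trans (hlip 1 0)
  cases k with
  | zero => simpa using hlip x t
  | succ n =>
    obtain ⟨ξ, hξ, hrem⟩ := taylor_mean_remainder_lagrange_iteratedDeriv hx hf.contDiffOn
    rw [taylorWithinEval_eq_taylorWithinEval_univ (hf.contDiffAt.of_le (by norm_cast; omega))
      (uniqueDiffOn_uIcc hx) left_mem_uIcc] at hrem
    have hξt : |ξ - t| ≤ |x - t| := abs_sub_left_of_mem_uIcc (uIoo_subset_uIcc_self hξ)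
    have hrem_succ : f x - taylorWithinEval f (n + 1) univ t x =
        (iteratedDeriv (n + 1) f ξ - iteratedDeriv (n + 1) f t) * (x - t) ^ (n + 1) /
          (n + 1).factorial := by
      rw [taylorWithinEval_succ, iteratedDerivWithin_univ, sub_add_eq_sub_sub, hrem,
        Nat.factorial_succ, smul_eq_mul]
      push_cast
      ring
    calc |f x - taylorWithinEval f (n + 1) univ t x|
        ≤ L * |x - t| * |x - t| ^ (n + 1) / (n + 1).factorial := by
          rw [hrem_succ, abs_div, abs_mul, abs_pow, Nat.abs_cast]
          gcongr
          exact (hlip ξ t).trans (by gcongr)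
      _ = L / (n + 1).factorial * |x - t| ^ (n + 1 + 1) := by ring

theorem kernel_bias_bound_lipschitz_general
    (A B L' : ℝ) (k : ℕ) (t φ : ℝ) (hφ : 0 < φ)
    (K J : ℝ → ℝ) (hK_meas : Measurable K)
    (hK_bdd : ∃ C, ∀ u, |K u| ≤ C)
    (hK_supp : ∀ u, u ∉ Icc A B → K u = 0)
    (hK_mom : ∀ j ∈ Finset.Icc 1 k, (∫ u, u ^ j * K u) = 0)
    (hJ : ContDiff ℝ k J)
    (hJlip : ∀ s s' : ℝ, |iteratedDeriv k J s - iteratedDeriv k J s'| ≤ L' * |s - s'|) :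
    |∫ u, K u * (J (t + φ * u) - J t)|
      ≤ (L' / k.factorial) * φ ^ (k + 1) * ∫ u, |K u * u ^ (k + 1)| := by
  have hint (h : ℝ → ℝ) (hh : Continuous h) : Integrable fun u => K u * h u :=
    Integrable.mul_of_bdd_of_support_subset_isCompact isCompact_Icc hK_meas hK_bdd hK_supp hh
  set R : ℝ → ℝ := fun u => J (t + φ * u) - taylorWithinEval J k univ t (t + φ * u)
  set c : ℕ → ℝ := fun j => iteratedDeriv j J t / j.factorial * φ ^ j
  have hsplit (u : ℝ) : J (t + φ * u) - J t = R u + ∑ j ∈ Finset.Icc 1 k, c j * u ^ j := by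
    simp only [R, c, mul_assoc, ← mul_pow, ← taylorWithinEval_univ_sub_self]
    ring
  have hR_cont : Continuous R := by
    simp only [R, taylor_within_apply]
    have := hJ.continuous
    fun_prop
  have hR_bound (u : ℝ) : |R u| ≤ L' / k.factorial * φ ^ (k + 1) * |u| ^ (k + 1) := by
    simpa [abs_mul, abs_of_pos hφ, mul_pow, mul_assoc] using
      abs_sub_taylorWithinEval_le_of_lipschitz hJ hJlip t (t + φ * u)
  have hpoly : ∫ u, K u * ∑ j ∈ Finset.Icc 1 k, c j * u ^ j = 0 :=
    integral_mul_sum_pow_eq_zero_of_moments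
      (fun j _ => by simpa only [mul_comm] using hint _ (continuous_pow j)) hK_mom c
  simp only [hsplit, mul_add]
  rw [integral_add (hint R hR_cont) (hint _ (by fun_prop)), hpoly, add_zero,
    ← integral_const_mul (L' / k.factorial * φ ^ (k + 1)), ← Real.norm_eq_abs]
  refine norm_integral_le_of_norm_le ((hint (· ^ (k + 1)) (continuous_pow _)).abs.const_mul _)
    (ae_of_all _ fun u => ?_)
  rw [Real.norm_eq_abs, abs_mul, abs_mul, abs_pow]
  calc |K u| * |R u| ≤ |K u| * (L' / k.factorial * φ ^ (k + 1) * |u| ^ (k + 1)) :=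
        mul_le_mul_of_nonneg_left (hR_bound u) (abs_nonneg _)
    _ = _ := by ring

/-- Quantitative bias bound for a kernel of order `k` applied to a function
whose `k`-th derivative is Lipschitz with constant `L'`. -/
theorem kernel_bias_bound_lipschitz
    (A B L' : ℝ) (k : ℕ) (t φ : ℝ) (hφ : 0 < φ) (hL' : 0 ≤ L')
    (K J : ℝ → ℝ) (hK_meas : Measurable K)
    (hK_bdd : ∃ C, ∀ u, |K u| ≤ C)
    (hK_supp : ∀ u, u ∉ Icc A B → K u = 0)
    (hK_int : (∫ u, K u) = 1)
    (hK_mom : ∀ j ∈ Finset.Icc 1 k, (∫ u, u ^ j * K u) = 0)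
    (hJ : ContDiff ℝ k J)
    (hJlip : ∀ s s' : ℝ, |iteratedDeriv k J s - iteratedDeriv k J s'| ≤ L' * |s - s'|) :
    |∫ u, K u * (J (t + φ * u) - J t)|
      ≤ (L' / k.factorial) * φ ^ (k + 1) * ∫ u, |K u * u ^ (k + 1)| :=
  kernel_bias_bound_lipschitz_general A B L' k t φ hφ K J hK_meas hK_bdd hK_supp hK_mom hJ hJlip
end
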